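/- Euler–Maruyama statistical linear regression residual covariance: under the setting of the previous statement (X̂ square-integrable with invertible covariance P, Z independent of X̂ with zero mean and identity second moment, A = Cov(μ(X̂), X̂) P⁻¹, b = E[μ(X̂)] − A E[X̂], and additionally E[‖σ(X̂) Z‖²] < ∞), the residual R_δ = μ(X̂) δ + √δ · σ(X̂) Z − (A X̂ + b) δ has covariance matrix Cov(R_δ, R_δ) = δ · E[σ(X̂) σ(X̂)ᵀ] + δ² · Cov(μ(X̂) − A X̂, μ(X̂) − A X̂). In particular Cov(R_δ, R_δ) = E[σ(X̂) σ(X̂)ᵀ] δ + o(δ) as δ → 0. -/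

import Mathlib

open MeasureTheory Matrix Asymptotics

/-!
Write `Y = μ(X̂) - A X̂` and `W = σ(X̂) Z`, so that `R_δ = δ Y + √δ W - δ b`. The constant `δ b`
does not affect covariances, and `W` is uncorrelated with every square-integrable function of
`X̂`: expanding `W = ∑ₖ σ(X̂)_{·k} Zₖ`, independence factors each term through `E[Zₖ] = 0`.
For the same reason `E[W Wᵀ] = E[σ(X̂) E[Z Zᵀ] σ(X̂)ᵀ] = E[σ(X̂) σ(X̂)ᵀ]`. Bilinearity of the
covariance then leaves `δ E[σσᵀ] + δ² Cov(Y, Y)`, and the second term is `o(δ)`.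
-/

/-- Entrywise cross-covariance matrix of two random vectors. -/
noncomputable def covMatrix {Ω : Type*} [MeasurableSpace Ω] (P : Measure Ω) {n d : ℕ}
    (U : Ω → EuclideanSpace ℝ (Fin n)) (V : Ω → EuclideanSpace ℝ (Fin d)) :
    Matrix (Fin n) (Fin d) ℝ :=
  Matrix.of fun i j =>
    ∫ ω, (U ω i - ∫ ω', U ω' i ∂P) * (V ω j - ∫ ω', V ω' j ∂P) ∂P

open ProbabilityTheory

lemma covMatrix_apply {Ω : Type*} [MeasurableSpace Ω] (P : Measure Ω) {n d : ℕ}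
    (U : Ω → EuclideanSpace ℝ (Fin n)) (V : Ω → EuclideanSpace ℝ (Fin d))
    (i : Fin n) (j : Fin d) :
    covMatrix P U V i j = cov[fun ω => U ω i, fun ω => V ω j; P] :=
  rfl

lemma covariance_const_mul_add_const_mul {Ω : Type*} [MeasurableSpace Ω] {P : Measure Ω}
    [IsFiniteMeasure P] {Y Y' W W' : Ω → ℝ} (hY : MemLp Y 2 P) (hY' : MemLp Y' 2 P)
    (hW : MemLp W 2 P) (hW' : MemLp W' 2 P) (a c : ℝ) :
    cov[fun ω => a * Y ω + c * W ω, fun ω => a * Y' ω + c * W' ω; P] =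
      a ^ 2 * cov[Y, Y'; P] + a * c * (cov[Y, W'; P] + cov[W, Y'; P]) + c ^ 2 * cov[W, W'; P] := by
  change cov[(fun ω => a * Y ω) + fun ω => c * W ω,
    (fun ω => a * Y' ω) + fun ω => c * W' ω; P] = _
  rw [covariance_add_left (hY.const_mul a) (hW.const_mul c)
      ((hY'.const_mul a).add (hW'.const_mul c)),
    covariance_add_right (hY.const_mul a) (hY'.const_mul a) (hW'.const_mul c),
    covariance_add_right (hW.const_mul c) (hY'.const_mul a) (hW'.const_mul c)]
  simp only [covariance_const_mul_left, covariance_const_mul_right]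
  ring

lemma MeasureTheory.MemLp.euclideanSpace_apply {Ω ι : Type*} [MeasurableSpace Ω] {P : Measure Ω}
    [Fintype ι] {p : ENNReal} {f : Ω → EuclideanSpace ℝ ι} (hf : MemLp f p P) (i : ι) :
    MemLp (fun ω => f ω i) p P :=
  (EuclideanSpace.proj (𝕜 := ℝ) i : EuclideanSpace ℝ ι →L[ℝ] ℝ).comp_memLp' hf

lemma MeasureTheory.MemLp.mulVec_apply {Ω ι κ : Type*} [MeasurableSpace Ω] {P : Measure Ω}
    [Fintype κ] {p : ENNReal} {f : Ω → EuclideanSpace ℝ κ} (hf : MemLp f p P)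
    (A : Matrix ι κ ℝ) (i : ι) :
    MemLp (fun ω => (A *ᵥ f ω) i) p P := by
  simpa [mulVec, dotProduct] using
    memLp_finsetSum Finset.univ fun j _ => (hf.euclideanSpace_apply j).const_mul (A i j)

section MultiplicativeNoise

variable {Ω α ι κ : Type*} [MeasurableSpace Ω] [MeasurableSpace α] [Fintype κ]
  {P : Measure Ω} {X : Ω → α} {Z : Ω → EuclideanSpace ℝ κ} {σ : α → Matrix ι κ ℝ}

lemma ProbabilityTheory.IndepFun.integral_comp_mul_mulVec_eq_zero [IsFiniteMeasure P]
    (hXZ : IndepFun X Z P)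
    (hσmeas : ∀ i k, Measurable fun x => σ x i k) (hσ : ∀ i k, MemLp (fun ω => σ (X ω) i k) 2 P)
    (hZ : ∀ k, MemLp (fun ω => Z ω k) 2 P) (hZmean : ∀ k, ∫ ω, Z ω k ∂P = 0)
    {g : α → ℝ} (hg : Measurable g) (hgX : MemLp (fun ω => g (X ω)) 2 P) (i : ι) :
    ∫ ω, g (X ω) * (σ (X ω) *ᵥ Z ω) i ∂P = 0 := by
  have hindep : ∀ k, IndepFun (fun ω => g (X ω) * σ (X ω) i k) (fun ω => Z ω k) P := fun k =>
    hXZ.comp (φ := fun x => g x * σ x i k) (ψ := fun z : EuclideanSpace ℝ κ => z k)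
      (hg.mul (hσmeas i k)) (by fun_prop)
  have hgσ : ∀ k, Integrable (fun ω => g (X ω) * σ (X ω) i k) P := fun k =>
    hgX.integrable_mul (hσ i k)
  have hterm : ∀ k, Integrable (fun ω => g (X ω) * σ (X ω) i k * Z ω k) P := fun k =>
    (hindep k).integrable_mul (hgσ k) ((hZ k).integrable one_le_two)
  simp_rw [mulVec, dotProduct, Finset.mul_sum, ← mul_assoc]
  rw [integral_finsetSum _ fun k _ => hterm k]
  refine Finset.sum_eq_zero fun k _ => ?_
  rw [(hindep k).integral_fun_mul_eq_mul_integral (hgσ k).1 (hZ k).1, hZmean k, mul_zero]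

lemma ProbabilityTheory.IndepFun.integral_mulVec_eq_zero [IsFiniteMeasure P]
    (hXZ : IndepFun X Z P)
    (hσmeas : ∀ i k, Measurable fun x => σ x i k) (hσ : ∀ i k, MemLp (fun ω => σ (X ω) i k) 2 P)
    (hZ : ∀ k, MemLp (fun ω => Z ω k) 2 P) (hZmean : ∀ k, ∫ ω, Z ω k ∂P = 0) (i : ι) :
    ∫ ω, (σ (X ω) *ᵥ Z ω) i ∂P = 0 := by
  simpa using hXZ.integral_comp_mul_mulVec_eq_zero hσmeas hσ hZ hZmean measurable_const
    (memLp_const 1) i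

lemma ProbabilityTheory.IndepFun.integral_mulVec_mul_mulVec [DecidableEq κ]
    (hXZ : IndepFun X Z P)
    (hσmeas : ∀ i k, Measurable fun x => σ x i k) (hσ : ∀ i k, MemLp (fun ω => σ (X ω) i k) 2 P)
    (hZ : ∀ k, MemLp (fun ω => Z ω k) 2 P)
    (hZcov : ∀ k l, ∫ ω, Z ω k * Z ω l ∂P = (1 : Matrix κ κ ℝ) k l) (i j : ι) :
    ∫ ω, (σ (X ω) *ᵥ Z ω) i * (σ (X ω) *ᵥ Z ω) j ∂P = ∫ ω, (σ (X ω) * (σ (X ω))ᵀ) i j ∂P := by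
  have hindep : ∀ k l, IndepFun (fun ω => σ (X ω) i k * σ (X ω) j l)
      (fun ω => Z ω k * Z ω l) P := fun k l =>
    hXZ.comp (φ := fun x => σ x i k * σ x j l) (ψ := fun z : EuclideanSpace ℝ κ => z k * z l)
      ((hσmeas i k).mul (hσmeas j l)) (by fun_prop)
  have hσσ : ∀ k l, Integrable (fun ω => σ (X ω) i k * σ (X ω) j l) P := fun k l =>
    (hσ i k).integrable_mul (hσ j l)
  have hZZ : ∀ k l, Integrable (fun ω => Z ω k * Z ω l) P := fun k l =>
    (hZ k).integrable_mul (hZ l)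
  have hterm : ∀ k l, Integrable (fun ω => σ (X ω) i k * σ (X ω) j l * (Z ω k * Z ω l)) P :=
    fun k l => (hindep k l).integrable_mul (hσσ k l) (hZZ k l)
  have hexpand : ∀ ω, (σ (X ω) *ᵥ Z ω) i * (σ (X ω) *ᵥ Z ω) j =
      ∑ k, ∑ l, σ (X ω) i k * σ (X ω) j l * (Z ω k * Z ω l) := fun ω => by
    simp only [mulVec, dotProduct, Finset.sum_mul_sum]
    exact Finset.sum_congr rfl fun k _ => Finset.sum_congr rfl fun l _ => by ring
  simp_rw [hexpand, mul_apply, transpose_apply]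
  rw [integral_finsetSum _ fun k _ => integrable_finsetSum _ fun l _ => hterm k l,
    integral_finsetSum _ fun k _ => hσσ k k]
  refine Finset.sum_congr rfl fun k _ => ?_
  rw [integral_finsetSum _ fun l _ => hterm k l]
  simp_rw [(hindep k _).integral_fun_mul_eq_mul_integral (hσσ k _).1 (hZZ k _).1, hZcov,
    one_apply, mul_ite, mul_one, mul_zero, Finset.sum_ite_eq, Finset.mem_univ, if_true]


lemma ProbabilityTheory.IndepFun.covariance_comp_mulVec_eq_zero [IsFiniteMeasure P]
    (hXZ : IndepFun X Z P)
    (hσmeas : ∀ i k, Measurable fun x => σ x i k) (hσ : ∀ i k, MemLp (fun ω => σ (X ω) i k) 2 P)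
    (hZ : ∀ k, MemLp (fun ω => Z ω k) 2 P) (hZmean : ∀ k, ∫ ω, Z ω k ∂P = 0)
    {g : α → ℝ} (hg : Measurable g) (hgX : MemLp (fun ω => g (X ω)) 2 P) (i : ι) :
    cov[fun ω => g (X ω), fun ω => (σ (X ω) *ᵥ Z ω) i; P] = 0 := by
  rw [covariance, hXZ.integral_mulVec_eq_zero hσmeas hσ hZ hZmean i]
  simp_rw [sub_zero]
  exact hXZ.integral_comp_mul_mulVec_eq_zero hσmeas hσ hZ hZmean
    (hg.sub measurable_const) (hgX.sub (memLp_const _)) i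

lemma ProbabilityTheory.IndepFun.covariance_mulVec_mulVec [IsFiniteMeasure P] [DecidableEq κ]
    (hXZ : IndepFun X Z P)
    (hσmeas : ∀ i k, Measurable fun x => σ x i k) (hσ : ∀ i k, MemLp (fun ω => σ (X ω) i k) 2 P)
    (hZ : ∀ k, MemLp (fun ω => Z ω k) 2 P) (hZmean : ∀ k, ∫ ω, Z ω k ∂P = 0)
    (hZcov : ∀ k l, ∫ ω, Z ω k * Z ω l ∂P = (1 : Matrix κ κ ℝ) k l) (i j : ι) :
    cov[fun ω => (σ (X ω) *ᵥ Z ω) i, fun ω => (σ (X ω) *ᵥ Z ω) j; P] =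
      ∫ ω, (σ (X ω) * (σ (X ω))ᵀ) i j ∂P := by
  rw [covariance, hXZ.integral_mulVec_eq_zero hσmeas hσ hZ hZmean i,
    hXZ.integral_mulVec_eq_zero hσmeas hσ hZ hZmean j]
  simp_rw [sub_zero]
  exact hXZ.integral_mulVec_mul_mulVec hσmeas hσ hZ hZcov i j

lemma ProbabilityTheory.IndepFun.covariance_const_mul_comp_add_const_mul_mulVec
    [IsFiniteMeasure P] [DecidableEq κ] (hXZ : IndepFun X Z P)
    (hσmeas : ∀ i k, Measurable fun x => σ x i k) (hσ : ∀ i k, MemLp (fun ω => σ (X ω) i k) 2 P)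
    (hZ : ∀ k, MemLp (fun ω => Z ω k) 2 P) (hZmean : ∀ k, ∫ ω, Z ω k ∂P = 0)
    (hZcov : ∀ k l, ∫ ω, Z ω k * Z ω l ∂P = (1 : Matrix κ κ ℝ) k l)
    (hσZ : ∀ i, MemLp (fun ω => (σ (X ω) *ᵥ Z ω) i) 2 P)
    {g h : α → ℝ} (hg : Measurable g) (hh : Measurable h) (hgX : MemLp (fun ω => g (X ω)) 2 P)
    (hhX : MemLp (fun ω => h (X ω)) 2 P) (a c : ℝ) (i j : ι) :
    cov[fun ω => a * g (X ω) + c * (σ (X ω) *ᵥ Z ω) i,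
      fun ω => a * h (X ω) + c * (σ (X ω) *ᵥ Z ω) j; P] =
      a ^ 2 * cov[fun ω => g (X ω), fun ω => h (X ω); P] +
        c ^ 2 * ∫ ω, (σ (X ω) * (σ (X ω))ᵀ) i j ∂P := by
  rw [covariance_const_mul_add_const_mul hgX hhX (hσZ i) (hσZ j),
    hXZ.covariance_comp_mulVec_eq_zero hσmeas hσ hZ hZmean hg hgX,
    covariance_comm (fun ω => (σ (X ω) *ᵥ Z ω) i),
    hXZ.covariance_comp_mulVec_eq_zero hσmeas hσ hZ hZmean hh hhX,
    hXZ.covariance_mulVec_mulVec hσmeas hσ hZ hZmean hZcov]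
  ring

end MultiplicativeNoise

lemma isLittleO_self_nhdsGT_of_eq_sq_mul {f : ℝ → ℝ} {c : ℝ}
    (hf : ∀ δ > 0, f δ = δ ^ 2 * c) :
    f =o[nhdsWithin 0 (Set.Ioi 0)] fun δ => δ := by
  refine (((isLittleO_pow_id one_lt_two).const_mul_left c).mono nhdsWithin_le_nhds).congr' ?_
    .rfl
  filter_upwards [self_mem_nhdsWithin] with δ hδ
  rw [hf δ hδ, mul_comm]

theorem em_slr_residual_covariance_general
    {Ω : Type*} [MeasurableSpace Ω] (P : Measure Ω) [IsProbabilityMeasure P]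
    {d w : ℕ} (Xhat : Ω → EuclideanSpace ℝ (Fin d))
    (μ : EuclideanSpace ℝ (Fin d) → EuclideanSpace ℝ (Fin d))
    (σ : EuclideanSpace ℝ (Fin d) → Matrix (Fin d) (Fin w) ℝ)
    (Z : Ω → EuclideanSpace ℝ (Fin w))
    (hμmeas : Measurable μ)
    (hσmeas : ∀ i j, Measurable fun x => σ x i j)
    (hX : MemLp Xhat 2 P) (hμX : MemLp (fun ω => μ (Xhat ω)) 2 P)
    (hσX : ∀ i j, MemLp (fun ω => σ (Xhat ω) i j) 2 P)
    (hZ : MemLp Z 2 P)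
    (hσZ : MemLp (fun ω => (WithLp.toLp 2 (fun i => (σ (Xhat ω) *ᵥ Z ω) i) : EuclideanSpace ℝ (Fin d))) 2 P)
    (hindep : ProbabilityTheory.IndepFun Xhat Z P)
    (hZmean : ∀ i, ∫ ω, Z ω i ∂P = 0)
    (hZcov : ∀ i j, ∫ ω, Z ω i * Z ω j ∂P = (1 : Matrix (Fin w) (Fin w) ℝ) i j)
    (A : Matrix (Fin d) (Fin d) ℝ) (b : EuclideanSpace ℝ (Fin d))
    (R : ℝ → Ω → EuclideanSpace ℝ (Fin d))
    (hR : ∀ δ ω i, R δ ω i = δ * μ (Xhat ω) i + Real.sqrt δ * (σ (Xhat ω) *ᵥ Z ω) i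
      - δ * ((A *ᵥ Xhat ω) i + b i)) :
    (∀ δ > (0 : ℝ), covMatrix P (R δ) (R δ) =
      δ • (Matrix.of (fun i j => ∫ ω, (σ (Xhat ω) * (σ (Xhat ω))ᵀ) i j ∂P) :
        Matrix (Fin d) (Fin d) ℝ) +
      δ ^ 2 • covMatrix P
        (fun ω => (WithLp.toLp 2 (fun i => μ (Xhat ω) i - (A *ᵥ Xhat ω) i) : EuclideanSpace ℝ (Fin d)))
        (fun ω => (WithLp.toLp 2 (fun i => μ (Xhat ω) i - (A *ᵥ Xhat ω) i) : EuclideanSpace ℝ (Fin d)))) ∧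
    (∀ i j, (fun δ => covMatrix P (R δ) (R δ) i j -
        δ * ∫ ω, (σ (Xhat ω) * (σ (Xhat ω))ᵀ) i j ∂P)
      =o[nhdsWithin (0 : ℝ) (Set.Ioi 0)] fun δ => δ) := by
  have hZi : ∀ k, MemLp (fun ω => Z ω k) 2 P := hZ.euclideanSpace_apply
  have hW : ∀ i, MemLp (fun ω => (σ (Xhat ω) *ᵥ Z ω) i) 2 P := hσZ.euclideanSpace_apply
  have hdrift : ∀ i, Measurable fun x : EuclideanSpace ℝ (Fin d) => μ x i - (A *ᵥ x) i := by
    fun_prop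
  have hY : ∀ i, MemLp (fun ω => μ (Xhat ω) i - (A *ᵥ Xhat ω) i) 2 P := fun i =>
    (hμX.euclideanSpace_apply i).sub (hX.mulVec_apply A i)
  have hcov : ∀ δ > 0, ∀ i j, covMatrix P (R δ) (R δ) i j =
      δ * ∫ ω, (σ (Xhat ω) * (σ (Xhat ω))ᵀ) i j ∂P +
      δ ^ 2 * cov[fun ω => μ (Xhat ω) i - (A *ᵥ Xhat ω) i,
        fun ω => μ (Xhat ω) j - (A *ᵥ Xhat ω) j; P] := by
    intro δ hδ i j
    have hRi : ∀ i, (fun ω => R δ ω i) = fun ω => (δ * (μ (Xhat ω) i - (A *ᵥ Xhat ω) i) +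
        Real.sqrt δ * (σ (Xhat ω) *ᵥ Z ω) i) - δ * b i := fun i => funext fun ω => by
      rw [hR]; ring
    have hRes : ∀ i, Integrable (fun ω => δ * (μ (Xhat ω) i - (A *ᵥ Xhat ω) i) +
        Real.sqrt δ * (σ (Xhat ω) *ᵥ Z ω) i) P := fun i =>
      (((hY i).const_mul δ).add ((hW i).const_mul _)).integrable one_le_two
    rw [covMatrix_apply, hRi, hRi, covariance_sub_const_left (hRes i),
      covariance_sub_const_right (hRes j),
      hindep.covariance_const_mul_comp_add_const_mul_mulVec hσmeas hσX hZi hZmean hZcov hW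
        (hdrift i) (hdrift j) (hY i) (hY j), Real.sq_sqrt hδ.le]
    ring
  refine ⟨fun δ hδ => ?_, fun i j => isLittleO_self_nhdsGT_of_eq_sq_mul fun δ hδ => by
    rw [hcov δ hδ, add_sub_cancel_left]⟩
  ext i j
  simp only [hcov δ hδ, Matrix.add_apply, Matrix.smul_apply, of_apply, smul_eq_mul]
  rfl

/-- Euler–Maruyama statistical linear regression residual covariance:
`Cov(R_δ, R_δ) = δ E[σ(X̂)σ(X̂)ᵀ] + δ² Cov(μ(X̂) − A X̂, μ(X̂) − A X̂)`;
in particular `Cov(R_δ, R_δ) = E[σ(X̂)σ(X̂)ᵀ] δ + o(δ)` as `δ → 0⁺`. -/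
theorem em_slr_residual_covariance
    {Ω : Type*} [MeasurableSpace Ω] (P : Measure Ω) [IsProbabilityMeasure P]
    {d w : ℕ} (Xhat : Ω → EuclideanSpace ℝ (Fin d))
    (μ : EuclideanSpace ℝ (Fin d) → EuclideanSpace ℝ (Fin d))
    (σ : EuclideanSpace ℝ (Fin d) → Matrix (Fin d) (Fin w) ℝ)
    (Z : Ω → EuclideanSpace ℝ (Fin w))
    (hXmeas : Measurable Xhat) (hμmeas : Measurable μ)
    (hσmeas : ∀ i j, Measurable fun x => σ x i j)
    (hZmeas : Measurable Z)
    (hX : MemLp Xhat 2 P) (hμX : MemLp (fun ω => μ (Xhat ω)) 2 P)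
    (hσX : ∀ i j, MemLp (fun ω => σ (Xhat ω) i j) 2 P)
    (hZ : MemLp Z 2 P)
    (hσZ : MemLp (fun ω => (WithLp.toLp 2 (fun i => (σ (Xhat ω) *ᵥ Z ω) i) : EuclideanSpace ℝ (Fin d))) 2 P)
    (hindep : ProbabilityTheory.IndepFun Xhat Z P)
    (hZmean : ∀ i, ∫ ω, Z ω i ∂P = 0)
    (hZcov : ∀ i j, ∫ ω, Z ω i * Z ω j ∂P = (1 : Matrix (Fin w) (Fin w) ℝ) i j)
    (hP : IsUnit (covMatrix P Xhat Xhat).det)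
    (A : Matrix (Fin d) (Fin d) ℝ) (b : EuclideanSpace ℝ (Fin d))
    (hA : A = covMatrix P (fun ω => μ (Xhat ω)) Xhat * (covMatrix P Xhat Xhat)⁻¹)
    (hb : ∀ i, b i = (∫ ω, μ (Xhat ω) i ∂P) - ∑ j, A i j * ∫ ω, Xhat ω j ∂P)
    (R : ℝ → Ω → EuclideanSpace ℝ (Fin d))
    (hR : ∀ δ ω i, R δ ω i = δ * μ (Xhat ω) i + Real.sqrt δ * (σ (Xhat ω) *ᵥ Z ω) i
      - δ * ((A *ᵥ Xhat ω) i + b i)) :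
    (∀ δ > (0 : ℝ), covMatrix P (R δ) (R δ) =
      δ • (Matrix.of (fun i j => ∫ ω, (σ (Xhat ω) * (σ (Xhat ω))ᵀ) i j ∂P) :
        Matrix (Fin d) (Fin d) ℝ) +
      δ ^ 2 • covMatrix P
        (fun ω => (WithLp.toLp 2 (fun i => μ (Xhat ω) i - (A *ᵥ Xhat ω) i) : EuclideanSpace ℝ (Fin d)))
        (fun ω => (WithLp.toLp 2 (fun i => μ (Xhat ω) i - (A *ᵥ Xhat ω) i) : EuclideanSpace ℝ (Fin d)))) ∧
    (∀ i j, (fun δ => covMatrix P (R δ) (R δ) i j -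
        δ * ∫ ω, (σ (Xhat ω) * (σ (Xhat ω))ᵀ) i j ∂P)
      =o[nhdsWithin (0 : ℝ) (Set.Ioi 0)] fun δ => δ) :=
  em_slr_residual_covariance_general P Xhat μ σ Z hμmeas hσmeas hX hμX hσX hZ hσZ hindep hZmean
    hZcov A b R hR
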